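/- arXiv:2602.07280 — 2 statements merged into one kernel-verified Lean document; each statement's English description precedes it below -/
import Mathlib

section
/- Entropy upper bound via ball probabilities (single-shot achievability): H_X(d,0) ≤ R_X⁺(d,0) + log₂(R_X⁺(d,0) + 1) + log₂ e bits, where H_X(d,0) is the minimal entropy of a deterministic quantizer meeting distortion d almost surely, and R_X⁺(d,0) = inf_Q E[-log₂ Q(B_d(X))]. -/
noncomputable section

/-- `q` is a probability mass function on the finite alphabet `α`. -/
def isPMF {α : Type*} [Fintype α] (q : α → ℝ) : Prop :=
  (∀ a, 0 ≤ q a) ∧ ∑ a, q a = 1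

/-- Shannon entropy (in bits) of a pmf on a finite alphabet. -/
def ent {α : Type*} [Fintype α] (q : α → ℝ) : ℝ :=
  ∑ a, -(q a * Real.logb 2 (q a))

/-- Relative entropy (Kullback–Leibler divergence, in bits) between pmfs. -/
def klDiv {α : Type*} [Fintype α] (μ ν : α → ℝ) : ℝ :=
  ∑ a, μ a * Real.logb 2 (μ a / ν a)

/-- Probability, under `Q`, of the distortion-`D` ball around `x`:
`Q(B_D(x)) = Q {y : df x y ≤ D}`. -/
def probBall {X Y : Type*} [Fintype Y] (Q : Y → ℝ) (df : X → Y → ℝ) (D : ℝ) (x : X) : ℝ :=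
  ∑ y, if df x y ≤ D then Q y else 0

/-- Output marginal `P_Y` induced by input pmf `p` and kernel `K`. -/
def marg {X Y : Type*} [Fintype X] [Fintype Y] (p : X → ℝ) (K : X → Y → ℝ) : Y → ℝ :=
  fun y => ∑ x, p x * K x y

/-- Mutual information (in bits) `I(X;Y)` of the joint law `p ⊗ K`,
written as `E_X [ D(K(X) ‖ P_Y) ]`. -/
def mutInfo {X Y : Type*} [Fintype X] [Fintype Y] (p : X → ℝ) (K : X → Y → ℝ) : ℝ :=
  ∑ x, p x * klDiv (K x) (marg p K)

/-- Binary relative entropy `d(α‖q)` (in bits). -/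
def bdiv (a q : ℝ) : ℝ :=
  a * Real.logb 2 (a / q) + (1 - a) * Real.logb 2 ((1 - a) / (1 - q))

/-! Draw an i.i.d. `Q` codebook and quantize `x` to the first codeword within distortion `D`.
Its index `W` is geometric with mean `1 / Q(B_D(x))`, so by concavity of `log` the mean of
`log₂ W` is at most the rate `r = E[-log₂ Q(B_D(X))]`. A weighting of the integers that is affine
in `⌊log₂ W⌋`, with slope `1 + log₂ θ⁻¹` and offset `log₂ (1 - θ)⁻¹`, bounds the entropy of the
quantizer output through Gibbs' inequality; `θ = r / (r + 1)` turns this into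
`r + log₂ (r + 1) + log₂ e`. Truncating the codebook behind a fallback quantizer keeps all sums
finite at a cost that vanishes with the codebook length, some codebook does at least as well as
the average, and continuity passes from each `Q` to the infimum. -/

open Finset Real Filter Topology

section

variable {X Y : Type*}

section PMF

variable [Fintype X]

def pmfMap [DecidableEq Y] (p : X → ℝ) (f : X → Y) : Y → ℝ :=
  fun y => ∑ x, if f x = y then p x else 0

lemma sum_pmfMap_mul [Fintype Y] [DecidableEq Y] (p : X → ℝ) (f : X → Y) (g : Y → ℝ) :
    ∑ y, pmfMap p f y * g y = ∑ x, p x * g (f x) := by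
  simp only [pmfMap, sum_mul, ite_mul, zero_mul]
  rw [sum_comm]
  simp

lemma pmfMap_nonneg [DecidableEq Y] {p : X → ℝ} (hp : ∀ x, 0 ≤ p x) (f : X → Y) (y : Y) :
    0 ≤ pmfMap p f y :=
  sum_nonneg fun x _ => by split_ifs <;> simp [hp x]

lemma isPMF.pmfMap [Fintype Y] [DecidableEq Y] {p : X → ℝ} (hp : isPMF p) (f : X → Y) :
    isPMF (pmfMap p f) :=
  ⟨pmfMap_nonneg hp.1 f, by simpa [hp.2] using sum_pmfMap_mul p f 1⟩

lemma le_pmfMap [DecidableEq Y] {p : X → ℝ} (hp : ∀ x, 0 ≤ p x) (f : X → Y) (x : X) :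
    p x ≤ pmfMap p f (f x) := by
  unfold pmfMap
  simpa using single_le_sum (f := fun x' => if f x' = f x then p x' else 0)
    (fun x' _ => by split_ifs <;> simp [hp x']) (mem_univ x)

lemma isPMF.le_one {p : X → ℝ} (hp : isPMF p) (x : X) : p x ≤ 1 :=
  hp.2 ▸ single_le_sum (fun x _ => hp.1 x) (mem_univ x)

lemma ent_nonneg {p : X → ℝ} (hp : isPMF p) : 0 ≤ ent p :=
  sum_nonneg fun x _ => by
    nlinarith [hp.1 x, logb_nonpos one_lt_two (hp.1 x) (hp.le_one x)]

lemma mul_logb_sub_mul_logb_le {P μ : ℝ} (hP : 0 ≤ P) (hμ : 0 < μ) :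
    P * logb 2 μ - P * logb 2 P ≤ (μ - P) / log 2 := by
  rcases hP.eq_or_lt with rfl | hP
  · simp only [zero_mul, sub_self, sub_zero]
    positivity
  have key : P * log (μ / P) ≤ μ - P := by
    have := mul_le_mul_of_nonneg_left (log_le_sub_one_of_pos (div_pos hμ hP)) hP.le
    rwa [mul_sub, mul_div_cancel₀ _ hP.ne', mul_one] at this
  rw [log_div hμ.ne' hP.ne'] at key
  simp only [logb]
  rw [mul_div_assoc', mul_div_assoc', ← sub_div, ← mul_sub]
  gcongr

lemma ent_le_sum_mul_neg_logb [Fintype Y] {P μ : Y → ℝ} (hP : isPMF P) (hμ : ∑ y, μ y ≤ 1)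
    (hpos : ∀ y, 0 < μ y) :
    ent P ≤ ∑ y, P y * -logb 2 (μ y) := by
  have key : ∑ y, (P y * logb 2 (μ y) - P y * logb 2 (P y)) ≤ ∑ y, (μ y - P y) / log 2 :=
    sum_le_sum fun y _ => mul_logb_sub_mul_logb_le (hP.1 y) (hpos y)
  have hsum : ∑ y, (μ y - P y) / log 2 ≤ 0 := by
    rw [← sum_div, sum_sub_distrib, hP.2]
    exact div_nonpos_of_nonpos_of_nonneg (by linarith) (log_pos one_lt_two).le
  simp only [ent, mul_neg, sum_sub_distrib, sum_neg_distrib] at key ⊢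
  linarith

lemma ent_pmfMap_le [Fintype Y] [DecidableEq Y] {p : X → ℝ} (hp : isPMF p) (f : X → Y)
    {μ : Y → ℝ} (hμ : ∑ y, μ y ≤ 1) (hpos : ∀ y, 0 < μ y) :
    ent (pmfMap p f) ≤ ∑ x, p x * -logb 2 (μ (f x)) :=
  sum_pmfMap_mul p f (fun y => -logb 2 (μ y)) ▸
    ent_le_sum_mul_neg_logb (hp.pmfMap f) hμ hpos

end PMF

section FirstHit

variable (P : Y → Prop) [DecidablePred P]

def firstHit : (N : ℕ) → (Fin N → Y) → Option (Fin N)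
  | 0, _ => none
  | N + 1, c => if P (c 0) then some 0 else (firstHit N (Fin.tail c)).map Fin.succ

variable {P}

lemma firstHit_spec {N : ℕ} {c : Fin N → Y} {i : Fin N} (h : firstHit P N c = some i) :
    P (c i) := by
  induction N with
  | zero => exact i.elim0
  | succ N ih =>
    rw [firstHit] at h
    split_ifs at h with h0
    · cases h
      exact h0
    · obtain ⟨j, hj, rfl⟩ := Option.map_eq_some_iff.mp h
      exact ih hj

variable [Fintype Y]

lemma sum_fin_succ_pi {β : Type*} [AddCommMonoid β] (N : ℕ) (f : (Fin (N + 1) → Y) → β) :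
    ∑ c, f c = ∑ y, ∑ c : Fin N → Y, f (Fin.cons y c) := by
  rw [← Fintype.sum_prod_type']
  exact (Fintype.sum_equiv (Fin.consEquiv fun _ => Y) _ _ fun _ => rfl).symm

lemma sum_prod_pi_eq_one {Q : Y → ℝ} (hQ : ∑ y, Q y = 1) (N : ℕ) :
    ∑ c : Fin N → Y, ∏ i, Q (c i) = 1 := by
  classical
  simpa [hQ] using (sum_pow' univ Q N).symm

/-- The waiting time for `P` in an i.i.d. `Q` codebook is geometric. -/
lemma sum_prod_mul_firstHit_elim {Q : Y → ℝ} (hQ : ∑ y, Q y = 1) (N : ℕ) (g : ℕ → ℝ)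
    (F : ℝ) :
    ∑ c : Fin N → Y, (∏ i, Q (c i)) * (firstHit P N c).elim F (fun i => g i) =
      ∑ i ∈ range N, (∑ y, if P y then Q y else 0) * (1 - ∑ y, if P y then Q y else 0) ^ i * g i
        + (1 - ∑ y, if P y then Q y else 0) ^ N * F := by
  set q := ∑ y, if P y then Q y else 0
  have hmiss : ∑ y, (if P y then 0 else Q y) = 1 - q := by
    rw [← hQ, eq_sub_iff_add_eq, ← sum_add_distrib]
    exact sum_congr rfl fun y _ => by split_ifs <;> ring
  induction N generalizing g with
  | zero => simp [firstHit]
  | succ N ih =>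
    have hcons (y : Y) (c : Fin N → Y) :
        (∏ i, Q ((Fin.cons y c : Fin (N + 1) → Y) i)) *
            (firstHit P (N + 1) (Fin.cons y c)).elim F (fun i => g i) =
          (if P y then Q y else 0) * ((∏ i, Q (c i)) * g 0) +
            (if P y then 0 else Q y) *
              ((∏ i, Q (c i)) * (firstHit P N c).elim F (fun i => g (i + 1))) := by
      rw [Fin.prod_univ_succ, firstHit]
      simp only [Fin.cons_zero, Fin.cons_succ, Fin.tail_cons]
      by_cases hy : P y
      · simp [hy]; ring
      · cases firstHit P N c <;> simp [hy] <;> ring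
    simp_rw [sum_fin_succ_pi N, hcons, sum_add_distrib, ← mul_sum, ← sum_mul, sum_prod_pi_eq_one hQ,
      ih (fun i => g (i + 1)), hmiss, sum_range_succ' _ N, mul_add, mul_sum]
    change q * (1 * g 0) + _ = _
    simp_rw [fun i => show (1 - q) * (q * (1 - q) ^ i * g (i + 1)) =
      q * (1 - q) ^ (i + 1) * g (i + 1) by ring]
    ring

end FirstHit

section GeometricWeights

variable {q : ℝ}

lemma sum_geom_weights_le_one (hq1 : q ≤ 1) (N : ℕ) :
    ∑ i ∈ range N, q * (1 - q) ^ i ≤ 1 := by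
  have h := geom_sum_mul (1 - q) N
  rw [← mul_sum]
  nlinarith [pow_nonneg (sub_nonneg.mpr hq1) N]

lemma sum_geom_weights_mul_sub_one (q : ℝ) (N : ℕ) :
    ∑ i ∈ range N, q * (1 - q) ^ i * (q * (i + 1) - 1) = -(N * q * (1 - q) ^ N) := by
  induction N with
  | zero => simp
  | succ N ih =>
    rw [sum_range_succ, ih]
    push_cast
    ring

/-- Tangent line of `log` at the mean `1 / q` of the geometric waiting time. -/
lemma sum_geom_weights_mul_logb_le (hq0 : 0 ≤ q) (hq1 : q ≤ 1) (N : ℕ) :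
    ∑ i ∈ range N, q * (1 - q) ^ i * logb 2 (i + 1) ≤ -logb 2 q := by
  rcases hq0.eq_or_lt with rfl | hq0
  · simp
  have hlog2 := log_pos one_lt_two
  have tangent (i : ℕ) : logb 2 (i + 1) ≤ -logb 2 q + (q * (i + 1) - 1) / log 2 := by
    have h := log_le_sub_one_of_pos (mul_pos hq0 (Nat.cast_add_one_pos i))
    rw [log_mul hq0.ne' (Nat.cast_add_one_pos i).ne'] at h
    calc logb 2 (i + 1) = log (i + 1) / log 2 := rfl
      _ ≤ (-log q + (q * (i + 1) - 1)) / log 2 := by gcongr; linarith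
      _ = -logb 2 q + (q * (i + 1) - 1) / log 2 := by simp only [logb]; ring
  have hw (i : ℕ) : 0 ≤ q * (1 - q) ^ i := by have := sub_nonneg.mpr hq1; positivity
  calc ∑ i ∈ range N, q * (1 - q) ^ i * logb 2 (i + 1)
      ≤ ∑ i ∈ range N, q * (1 - q) ^ i * (-logb 2 q + (q * (i + 1) - 1) / log 2) :=
        sum_le_sum fun i _ => mul_le_mul_of_nonneg_left (tangent i) (hw i)
    _ = -logb 2 q * ∑ i ∈ range N, q * (1 - q) ^ i + -(N * q * (1 - q) ^ N) / log 2 := by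
        rw [← sum_geom_weights_mul_sub_one, sum_div, mul_sum, ← sum_add_distrib]
        exact sum_congr rfl fun i _ => by ring
    _ ≤ -logb 2 q * 1 + 0 := by
        have := sub_nonneg.mpr hq1
        gcongr
        · exact neg_nonneg.mpr (logb_nonpos one_lt_two hq0.le hq1)
        · exact sum_geom_weights_le_one hq1 N
        · exact div_nonpos_of_nonpos_of_nonneg (by simp only [neg_nonpos]; positivity) hlog2.le
    _ = -logb 2 q := by ring

end GeometricWeights

section LevelWeight

variable {θ : ℝ}

/-- Weights on the positive integers: the `2 ^ L` integers of level `L = ⌊log₂ i⌋` share the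
mass `(1 - θ) θ ^ L`, so `-log₂` of the weight is affine in `⌊log₂ i⌋`. -/
def levelWeight (θ : ℝ) (i : ℕ) : ℝ := (1 - θ) * (θ / 2) ^ Nat.log 2 i

lemma levelWeight_pos (hθ0 : 0 < θ) (hθ1 : θ < 1) (i : ℕ) : 0 < levelWeight θ i :=
  mul_pos (sub_pos.mpr hθ1) (by positivity)

lemma sum_Ico_levelWeight (θ : ℝ) (m : ℕ) : ∑ i ∈ Ico 1 (2 ^ m), levelWeight θ i = 1 - θ ^ m := by
  induction m with
  | zero => simp
  | succ m ih =>
    rw [← sum_Ico_consecutive _ Nat.one_le_two_pow (Nat.pow_le_pow_right two_pos m.le_succ), ih,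
      sum_congr rfl fun i hi => by
        rw [levelWeight, Nat.log_eq_of_pow_le_of_lt_pow (mem_Ico.mp hi).1 (mem_Ico.mp hi).2],
      sum_const, Nat.card_Ico, pow_succ, show 2 ^ m * 2 - 2 ^ m = 2 ^ m by omega, nsmul_eq_mul,
      div_pow]
    push_cast
    field_simp
    ring

lemma neg_logb_levelWeight (hθ0 : 0 < θ) (hθ1 : θ < 1) (i : ℕ) :
    -logb 2 (levelWeight θ i) = logb 2 (1 - θ)⁻¹ + Nat.log 2 i * (1 + logb 2 θ⁻¹) := by
  rw [levelWeight, logb_mul (sub_pos.mpr hθ1).ne' (by positivity), logb_pow,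
    logb_div hθ0.ne' two_ne_zero, logb_self_eq_one one_lt_two, logb_inv, logb_inv]
  ring

lemma sum_geom_weights_mul_neg_logb_levelWeight_le {q : ℝ} (hq0 : 0 ≤ q) (hq1 : q ≤ 1)
    (hθ0 : 0 < θ) (hθ1 : θ < 1) (N : ℕ) :
    ∑ i ∈ range N, q * (1 - q) ^ i * -logb 2 (levelWeight θ (i + 1)) ≤
      logb 2 (1 - θ)⁻¹ + (1 + logb 2 θ⁻¹) * -logb 2 q := by
  have hw (i : ℕ) : 0 ≤ q * (1 - q) ^ i := by have := sub_nonneg.mpr hq1; positivity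
  have hlevel : ∑ i ∈ range N, q * (1 - q) ^ i * (Nat.log 2 (i + 1) : ℝ) ≤ -logb 2 q :=
    (sum_le_sum fun i _ => mul_le_mul_of_nonneg_left
      (by exact_mod_cast natLog_le_logb (i + 1) 2) (hw i)).trans
      (sum_geom_weights_mul_logb_le hq0 hq1 N)
  have hθ : 0 ≤ logb 2 (1 - θ)⁻¹ :=
    logb_nonneg one_lt_two (one_le_inv₀ (sub_pos.mpr hθ1) |>.mpr (by linarith))
  have hθ' : 0 ≤ logb 2 θ⁻¹ := logb_nonneg one_lt_two (one_le_inv₀ hθ0 |>.mpr hθ1.le)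
  calc ∑ i ∈ range N, q * (1 - q) ^ i * -logb 2 (levelWeight θ (i + 1))
      = logb 2 (1 - θ)⁻¹ * ∑ i ∈ range N, q * (1 - q) ^ i +
          (1 + logb 2 θ⁻¹) * ∑ i ∈ range N, q * (1 - q) ^ i * (Nat.log 2 (i + 1) : ℝ) := by
        simp only [neg_logb_levelWeight hθ0 hθ1, mul_sum, ← sum_add_distrib]
        exact sum_congr rfl fun i _ => by ring
    _ ≤ logb 2 (1 - θ)⁻¹ * 1 + (1 + logb 2 θ⁻¹) * -logb 2 q := by
        gcongr
        exact sum_geom_weights_le_one hq1 N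
    _ = _ := by ring

end LevelWeight

lemma exists_le_sum_mul {ι : Type*} [Fintype ι] {w : ι → ℝ} (hw0 : ∀ i, 0 ≤ w i)
    (hw1 : ∑ i, w i = 1) (v : ι → ℝ) : ∃ i, v i ≤ ∑ i, w i * v i := by
  have h := inf_le_centerMass (s := univ) (f := v) (fun i _ => hw0 i) (by rw [hw1]; exact one_pos)
  rw [centerMass_eq_of_sum_1 _ _ hw1, inf'_le_iff] at h
  simpa using h

section Codebook

variable {df : X → Y → ℝ} {D : ℝ}

variable (df D) in
def codebookQuantizer {N : ℕ} (f₀ : X → Y) (c : Fin N → Y) (x : X) : Y :=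
  ((firstHit (fun y => df x y ≤ D) N c).map c).getD (f₀ x)

lemma codebookQuantizer_le {N : ℕ} {f₀ : X → Y} (c : Fin N → Y) {x : X}
    (hf₀ : df x (f₀ x) ≤ D) : df x (codebookQuantizer df D f₀ c x) ≤ D := by
  unfold codebookQuantizer
  cases h : firstHit (fun y => df x y ≤ D) N c with
  | none => exact hf₀
  | some i => exact firstHit_spec h

variable [Fintype Y]

lemma probBall_nonneg {Q : Y → ℝ} (hQ : ∀ y, 0 ≤ Q y) (df : X → Y → ℝ) (D : ℝ) (x : X) :
    0 ≤ probBall Q df D x :=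
  sum_nonneg fun y _ => by split_ifs <;> simp [hQ y]

lemma probBall_le_one {Q : Y → ℝ} (hQ : isPMF Q) (df : X → Y → ℝ) (D : ℝ) (x : X) :
    probBall Q df D x ≤ 1 :=
  hQ.2 ▸ sum_le_sum fun y _ => by split_ifs <;> simp [hQ.1 y]

lemma le_probBall {Q : Y → ℝ} (hQ : ∀ y, 0 ≤ Q y) {df : X → Y → ℝ} {D : ℝ} {x : X} {y : Y}
    (h : df x y ≤ D) : Q y ≤ probBall Q df D x := by
  unfold probBall
  simpa [h] using single_le_sum (f := fun y => if df x y ≤ D then Q y else 0)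
    (fun y _ => by split_ifs <;> simp [hQ y]) (mem_univ y)

def ballRate [Fintype X] (p : X → ℝ) (Q : Y → ℝ) (df : X → Y → ℝ) (D : ℝ) : ℝ :=
  ∑ x, p x * -logb 2 (probBall Q df D x)

lemma ballRate_nonneg [Fintype X] {p : X → ℝ} (hp : ∀ x, 0 ≤ p x) {Q : Y → ℝ} (hQ : isPMF Q)
    (df : X → Y → ℝ) (D : ℝ) : 0 ≤ ballRate p Q df D :=
  sum_nonneg fun x _ => mul_nonneg (hp x) (neg_nonneg.2
    (logb_nonpos one_lt_two (probBall_nonneg hQ.1 df D x) (probBall_le_one hQ df D x)))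

variable [DecidableEq Y] {θ : ℝ}

/-- The mass `θ ^ m` left over by the `2 ^ m - 1` codeword weights is spread uniformly to pay
for the fallback quantizer. -/
def codebookWeight (θ : ℝ) (m : ℕ) (c : Fin (2 ^ m - 1) → Y) (y : Y) : ℝ :=
  pmfMap (fun j : Fin (2 ^ m - 1) => levelWeight θ (j + 1)) c y + θ ^ m / Fintype.card Y

lemma sum_codebookWeight [Nonempty Y] (θ : ℝ) (m : ℕ) (c : Fin (2 ^ m - 1) → Y) :
    ∑ y, codebookWeight θ m c y = 1 := by
  have hY : (Fintype.card Y : ℝ) ≠ 0 := Nat.cast_ne_zero.mpr Fintype.card_ne_zero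
  have hcode : ∑ j : Fin (2 ^ m - 1), levelWeight θ (j + 1) = 1 - θ ^ m := by
    rw [Fin.sum_univ_eq_sum_range (fun j => levelWeight θ (j + 1)), ← sum_Ico_levelWeight,
      sum_Ico_eq_sum_range]
    simp_rw [add_comm 1]
  simp only [codebookWeight, sum_add_distrib, sum_const, card_univ, nsmul_eq_mul,
    mul_div_cancel₀ _ hY]
  have hmap := sum_pmfMap_mul (fun j : Fin (2 ^ m - 1) => levelWeight θ (j + 1)) c 1
  simp only [Pi.one_apply, mul_one] at hmap
  rw [hmap, hcode]
  ring

lemma codebookWeight_pos [Nonempty Y] (hθ0 : 0 < θ) (hθ1 : θ < 1) {m : ℕ}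
    (c : Fin (2 ^ m - 1) → Y) (y : Y) : 0 < codebookWeight θ m c y := by
  have : 0 < Fintype.card Y := Fintype.card_pos
  unfold codebookWeight
  exact add_pos_of_nonneg_of_pos
    (pmfMap_nonneg (fun j : Fin (2 ^ m - 1) => (levelWeight_pos hθ0 hθ1 (j + 1)).le) c y)
    (by positivity)

lemma neg_logb_codebookWeight_le [Nonempty Y] (hθ0 : 0 < θ) (hθ1 : θ < 1) {m : ℕ}
    (f₀ : X → Y) (c : Fin (2 ^ m - 1) → Y) (x : X) :
    -logb 2 (codebookWeight θ m c (codebookQuantizer df D f₀ c x)) ≤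
      (firstHit (fun y => df x y ≤ D) _ c).elim (-logb 2 (θ ^ m / Fintype.card Y))
        (fun i => -logb 2 (levelWeight θ (i + 1))) := by
  have hY : (0 : ℝ) < Fintype.card Y := Nat.cast_pos.mpr Fintype.card_pos
  have hcode (y : Y) : 0 ≤ pmfMap (fun j : Fin (2 ^ m - 1) => levelWeight θ (j + 1)) c y :=
    pmfMap_nonneg (fun j => (levelWeight_pos hθ0 hθ1 _).le) c y
  unfold codebookQuantizer codebookWeight
  cases h : firstHit (fun y => df x y ≤ D) _ c with
  | none =>
    refine neg_le_neg (logb_le_logb_of_le one_lt_two (by positivity) ?_)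
    exact le_add_of_nonneg_left (hcode (f₀ x))
  | some i =>
    refine neg_le_neg (logb_le_logb_of_le one_lt_two (levelWeight_pos hθ0 hθ1 _) ?_)
    exact le_add_of_le_of_nonneg
      (le_pmfMap (fun j : Fin (2 ^ m - 1) => (levelWeight_pos hθ0 hθ1 (j + 1)).le) c i)
      (by positivity)

end Codebook

section RandomCoding

variable [Fintype Y] [DecidableEq Y] [Nonempty Y] {df : X → Y → ℝ} {D θ : ℝ}

lemma sum_prod_mul_neg_logb_codebookWeight_le {Q : Y → ℝ} (hQ : isPMF Q) (hθ0 : 0 < θ)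
    (hθ1 : θ < 1) (m : ℕ) (f₀ : X → Y) (x : X) :
    ∑ c : Fin (2 ^ m - 1) → Y,
        (∏ i, Q (c i)) * -logb 2 (codebookWeight θ m c (codebookQuantizer df D f₀ c x)) ≤
      logb 2 (1 - θ)⁻¹ + (1 + logb 2 θ⁻¹) * -logb 2 (probBall Q df D x) +
        (1 - probBall Q df D x) ^ (2 ^ m - 1) * -logb 2 (θ ^ m / Fintype.card Y) :=
  calc _ ≤ ∑ c : Fin (2 ^ m - 1) → Y, (∏ i, Q (c i)) *
          (firstHit (fun y => df x y ≤ D) _ c).elim (-logb 2 (θ ^ m / Fintype.card Y))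
            (fun i => -logb 2 (levelWeight θ (i + 1))) :=
        sum_le_sum fun c _ => mul_le_mul_of_nonneg_left
          (neg_logb_codebookWeight_le hθ0 hθ1 f₀ c x) (prod_nonneg fun _ _ => hQ.1 _)
    _ = _ := sum_prod_mul_firstHit_elim hQ.2 _ (fun i => -logb 2 (levelWeight θ (i + 1))) _
    _ ≤ _ := add_le_add_left (sum_geom_weights_mul_neg_logb_levelWeight_le
        (probBall_nonneg hQ.1 df D x) (probBall_le_one hQ df D x) hθ0 hθ1 _) _

lemma exists_codebook_sum_mul_neg_logb_le [Fintype X] {p : X → ℝ} (hp : isPMF p) {Q : Y → ℝ}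
    (hQ : isPMF Q) (hθ0 : 0 < θ) (hθ1 : θ < 1) (m : ℕ) (f₀ : X → Y) :
    ∃ c : Fin (2 ^ m - 1) → Y,
      ∑ x, p x * -logb 2 (codebookWeight θ m c (codebookQuantizer df D f₀ c x)) ≤
        logb 2 (1 - θ)⁻¹ + (1 + logb 2 θ⁻¹) * ballRate p Q df D +
          ∑ x, p x * ((1 - probBall Q df D x) ^ (2 ^ m - 1) *
            -logb 2 (θ ^ m / Fintype.card Y)) := by
  obtain ⟨c, hc⟩ := exists_le_sum_mul (w := fun c : Fin (2 ^ m - 1) → Y => ∏ i, Q (c i))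
    (fun c => prod_nonneg fun i _ => hQ.1 _) (sum_prod_pi_eq_one hQ.2 _)
    (fun c => ∑ x, p x * -logb 2 (codebookWeight θ m c (codebookQuantizer df D f₀ c x)))
  refine ⟨c, hc.trans ?_⟩
  calc ∑ c : Fin (2 ^ m - 1) → Y, (∏ i, Q (c i)) *
          ∑ x, p x * -logb 2 (codebookWeight θ m c (codebookQuantizer df D f₀ c x))
      = ∑ x, p x * ∑ c : Fin (2 ^ m - 1) → Y,
          (∏ i, Q (c i)) * -logb 2 (codebookWeight θ m c (codebookQuantizer df D f₀ c x)) := by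
        simp_rw [mul_sum]
        rw [sum_comm]
        exact sum_congr rfl fun x _ => sum_congr rfl fun c _ => mul_left_comm _ _ _
    _ ≤ ∑ x, p x * (logb 2 (1 - θ)⁻¹ + (1 + logb 2 θ⁻¹) * -logb 2 (probBall Q df D x) +
          (1 - probBall Q df D x) ^ (2 ^ m - 1) * -logb 2 (θ ^ m / Fintype.card Y)) :=
        sum_le_sum fun x _ => mul_le_mul_of_nonneg_left
          (sum_prod_mul_neg_logb_codebookWeight_le hQ hθ0 hθ1 m f₀ x) (hp.1 x)
    _ = _ := by
        simp only [mul_add, sum_add_distrib, ← sum_mul, hp.2, one_mul, ballRate, mul_sum]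
        simp only [mul_left_comm]

end RandomCoding

lemma tendsto_pow_two_pow_sub_one_mul {a : ℝ} (ha0 : 0 ≤ a) (ha1 : a < 1) (b c : ℝ) :
    Tendsto (fun m : ℕ => a ^ (2 ^ m - 1) * (m * b + c)) atTop (𝓝 0) := by
  have hlim : Tendsto (fun m : ℕ => |b| * (m * a ^ m) + |c| * a ^ m) atTop (𝓝 0) := by
    simpa using ((tendsto_self_mul_const_pow_of_lt_one ha0 ha1).const_mul |b|).add
      ((tendsto_pow_atTop_nhds_zero_of_lt_one ha0 ha1).const_mul |c|)
  refine squeeze_zero_norm (fun m => ?_) hlim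
  have hm : m ≤ 2 ^ m - 1 := Nat.le_sub_one_of_lt m.lt_two_pow_self
  calc ‖a ^ (2 ^ m - 1) * (m * b + c)‖ = a ^ (2 ^ m - 1) * |m * b + c| := by
        rw [Real.norm_eq_abs, abs_mul, abs_of_nonneg (pow_nonneg ha0 _)]
    _ ≤ a ^ m * (m * |b| + |c|) := by
        refine mul_le_mul (pow_le_pow_of_le_one ha0 ha1.le hm) ?_ (abs_nonneg _) (pow_nonneg ha0 _)
        exact (abs_add_le _ _).trans_eq (by rw [abs_mul, Nat.abs_cast])
    _ = |b| * (m * a ^ m) + |c| * a ^ m := by ring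

lemma isPMF.exists_pos [Fintype X] {p : X → ℝ} (hp : isPMF p) : ∃ x, 0 < p x := by
  obtain ⟨x, -, hx⟩ := exists_lt_of_sum_lt (s := univ) (f := 0) (g := p) (by simp [hp.2])
  exact ⟨x, hx⟩

lemma exists_logb_inv_one_sub_add_mul_le {r : ℝ} (hr : 0 ≤ r) :
    ∃ θ, 0 < θ ∧ θ < 1 ∧
      logb 2 (1 - θ)⁻¹ + (1 + logb 2 θ⁻¹) * r ≤ r + logb 2 (r + 1) + logb 2 (exp 1) := by
  have hlog2 := log_pos one_lt_two
  rcases hr.eq_or_lt with rfl | hr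
  · refine ⟨1 / 2, by norm_num, by norm_num, ?_⟩
    have he : logb 2 2 ≤ logb 2 (exp 1) :=
      logb_le_logb_of_le one_lt_two two_pos (by linarith [exp_one_gt_d9])
    norm_num at he ⊢
    exact he
  refine ⟨r / (r + 1), by positivity, (div_lt_one (by linarith)).2 (by linarith), ?_⟩
  have h1 : (1 - r / (r + 1))⁻¹ = r + 1 := by field_simp; ring
  have h2 : (r / (r + 1))⁻¹ = 1 + 1 / r := by field_simp
  have h3 : r * logb 2 (1 + 1 / r) ≤ logb 2 (exp 1) := by
    have := log_le_sub_one_of_pos (show 0 < 1 + 1 / r by positivity)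
    simp only [logb, log_exp]
    rw [mul_div_assoc', div_le_div_iff_of_pos_right hlog2]
    calc r * log (1 + 1 / r) ≤ r * (1 / r) := by gcongr; linarith
      _ = 1 := by field_simp
  rw [h1, h2]
  linarith [show (1 + logb 2 (1 + 1 / r)) * r = r + r * logb 2 (1 + 1 / r) by ring]

section Quantizer

variable [Fintype X] [Fintype Y] [DecidableEq Y] {df : X → Y → ℝ} {D θ : ℝ}

/-- `H_X(d, 0)`. -/
def minQuantizerEntropy (p : X → ℝ) (df : X → Y → ℝ) (D : ℝ) : ℝ :=
  sInf {r : ℝ | ∃ f : X → Y, (∀ x, 0 < p x → df x (f x) ≤ D) ∧ r = ent (pmfMap p f)}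

lemma minQuantizerEntropy_le {p : X → ℝ} (hp : isPMF p) {f : X → Y}
    (hf : ∀ x, 0 < p x → df x (f x) ≤ D) : minQuantizerEntropy p df D ≤ ent (pmfMap p f) :=
  csInf_le ⟨0, by rintro r ⟨g, -, rfl⟩; exact ent_nonneg (hp.pmfMap g)⟩ ⟨f, hf, rfl⟩

lemma minQuantizerEntropy_le_ballRate [Nonempty Y] {p : X → ℝ} (hp : isPMF p) {f₀ : X → Y}
    (hf₀ : ∀ x, 0 < p x → df x (f₀ x) ≤ D) {Q : Y → ℝ} (hQ : isPMF Q)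
    (hQpos : ∀ x, 0 < p x → 0 < probBall Q df D x) (hθ0 : 0 < θ) (hθ1 : θ < 1) :
    minQuantizerEntropy p df D ≤ logb 2 (1 - θ)⁻¹ + (1 + logb 2 θ⁻¹) * ballRate p Q df D := by
  have hcodebook (m : ℕ) : minQuantizerEntropy p df D ≤
      logb 2 (1 - θ)⁻¹ + (1 + logb 2 θ⁻¹) * ballRate p Q df D +
        ∑ x, p x * ((1 - probBall Q df D x) ^ (2 ^ m - 1) *
          -logb 2 (θ ^ m / Fintype.card Y)) := by
    obtain ⟨c, hc⟩ := exists_codebook_sum_mul_neg_logb_le hp hQ hθ0 hθ1 m f₀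
    exact (minQuantizerEntropy_le hp fun x hx => codebookQuantizer_le c (hf₀ x hx)).trans
      ((ent_pmfMap_le hp _ (sum_codebookWeight θ m c).le (codebookWeight_pos hθ0 hθ1 c)).trans hc)
  have hfallback : Tendsto (fun m : ℕ => ∑ x, p x * ((1 - probBall Q df D x) ^ (2 ^ m - 1) *
      -logb 2 (θ ^ m / Fintype.card Y))) atTop (𝓝 0) := by
    have hY : (0 : ℝ) < Fintype.card Y := Nat.cast_pos.mpr Fintype.card_pos
    have hcost (m : ℕ) : -logb 2 (θ ^ m / Fintype.card Y) =
        m * logb 2 θ⁻¹ + logb 2 (Fintype.card Y) := by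
      rw [logb_div (pow_pos hθ0 m).ne' hY.ne', logb_pow, logb_inv]
      ring
    simp_rw [hcost]
    have hterm (x : X) : Tendsto (fun m : ℕ => p x * ((1 - probBall Q df D x) ^ (2 ^ m - 1) *
        (m * logb 2 θ⁻¹ + logb 2 (Fintype.card Y)))) atTop (𝓝 0) := by
      rcases (hp.1 x).eq_or_lt with hx | hx
      · simp [← hx]
      · simpa only [mul_zero] using (tendsto_pow_two_pow_sub_one_mul
          (sub_nonneg.2 (probBall_le_one hQ df D x)) (sub_lt_self _ (hQpos x hx)) _ _).const_mul
          (p x)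
    simpa only [sum_const_zero] using tendsto_finsetSum univ fun x _ => hterm x
  simpa using ge_of_tendsto' (tendsto_const_nhds.add hfallback) hcodebook

end Quantizer

end

theorem guaranteed_entropy_upper_bound_general {X Y : Type*} [Fintype X] [Fintype Y]
    [DecidableEq Y]
    (p : X → ℝ) (df : X → Y → ℝ) (D : ℝ) (hp : isPMF p)
    (hball : ∀ x, 0 < p x → ∃ y, df x y ≤ D)
    (Rplus : ℝ)
    (hRplus : Rplus = sInf {r : ℝ | ∃ Q : Y → ℝ, isPMF Q ∧
        (∀ x, 0 < p x → 0 < probBall Q df D x) ∧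
        r = ∑ x, p x * (- Real.logb 2 (probBall Q df D x))}) :
    sInf {r : ℝ | ∃ f : X → Y, (∀ x, 0 < p x → df x (f x) ≤ D) ∧
        r = ent (fun y => ∑ x, if f x = y then p x else 0)} ≤
      Rplus + Real.logb 2 (Rplus + 1) + Real.logb 2 (Real.exp 1) := by
  obtain ⟨x₀, hx₀⟩ := hp.exists_pos
  have : Nonempty Y := ⟨(hball x₀ hx₀).choose⟩
  choose! f₀ hf₀ using hball
  set rates := {r : ℝ | ∃ Q : Y → ℝ, isPMF Q ∧ (∀ x, 0 < p x → 0 < probBall Q df D x) ∧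
    r = ballRate p Q df D}
  have hrates : ∀ r ∈ rates, 0 ≤ r := by
    rintro r ⟨Q, hQ, -, rfl⟩
    exact ballRate_nonneg hp.1 hQ df D
  have hnonempty : rates.Nonempty := ⟨_, pmfMap p f₀, hp.pmfMap f₀, fun x hx => hx.trans_le
    ((le_pmfMap hp.1 f₀ x).trans (le_probBall (pmfMap_nonneg hp.1 f₀) (hf₀ x hx))), rfl⟩
  have hbound : ∀ r ∈ rates, minQuantizerEntropy p df D ≤ r + logb 2 (r + 1) + logb 2 (exp 1) := by
    rintro r ⟨Q, hQ, hQpos, rfl⟩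
    obtain ⟨θ, hθ0, hθ1, hθ⟩ := exists_logb_inv_one_sub_add_mul_le (ballRate_nonneg hp.1 hQ df D)
    exact (minQuantizerEntropy_le_ballRate hp hf₀ hQ hQpos hθ0 hθ1).trans hθ
  have hR : 0 ≤ Rplus := hRplus ▸ le_csInf hnonempty hrates
  subst hRplus
  exact ContinuousWithinAt.closure_le (csInf_mem_closure hnonempty ⟨0, hrates⟩)
    continuousWithinAt_const (by fun_prop (disch := positivity)) hbound

/-- single-shot achievability
`H_X(d,0) ≤ R_X⁺(d,0) + log₂(R_X⁺(d,0) + 1) + log₂ e` bits, where `H_X(d,0)` is the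
minimal output entropy of a deterministic quantizer meeting distortion `D` a.s. and
`R_X⁺(d,0) = inf_Q E[-log₂ Q(B_D(X))]`. -/
theorem guaranteed_entropy_upper_bound {X Y : Type*} [Fintype X] [Fintype Y]
    [Nonempty Y] [DecidableEq Y]
    (p : X → ℝ) (df : X → Y → ℝ) (D : ℝ) (hp : isPMF p)
    (hball : ∀ x, 0 < p x → ∃ y, df x y ≤ D)
    (Rplus : ℝ)
    (hRplus : Rplus = sInf {r : ℝ | ∃ Q : Y → ℝ, isPMF Q ∧
        (∀ x, 0 < p x → 0 < probBall Q df D x) ∧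
        r = ∑ x, p x * (- Real.logb 2 (probBall Q df D x))}) :
    sInf {r : ℝ | ∃ f : X → Y, (∀ x, 0 < p x → df x (f x) ≤ D) ∧
        r = ent (fun y => ∑ x, if f x = y then p x else 0)} ≤
      Rplus + Real.logb 2 (Rplus + 1) + Real.logb 2 (Real.exp 1) :=
  guaranteed_entropy_upper_bound_general p df D hp hball Rplus hRplus
end
end

section
/- Achievability direction for conditional excess distortion: given any Q on Y with 0 < Q(B_d(x)) < 1 for all relevant x, the kernel K(x) defined by placing mass α_Q(x) on Q restricted to B_d(x) (normalized) and mass 1-α_Q(x) on Q restricted to the complement (normalized), with α_Q(x) = max{1-ε, Q(B_d(x))}, satisfies K(x)(B_d(x)ᶜ) ≤ ε and D(K(x)‖Q) = d(α_Q(x)‖Q(B_d(x))); hence R_X^c(d,ε) ≤ E[d(α_Q(X)‖Q(B_d(X)))] for every such Q, giving R_X^c(d,ε) ≤ R_X^{c,+}(d,ε). -/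
noncomputable section

/-!
Reweighting `Q` by one constant on the ball `B_d(x)` and another on its complement gives a
kernel whose divergence from `Q` is the binary divergence `d(α‖Q(B_d(x)))`, computed on the
two pieces. By the chain rule `E[D(K(X)‖Q)] = I(X;Y) + D(P_Y‖Q)` and Gibbs' inequality,
`I(X;Y) ≤ E[D(K(X)‖Q)]`; since `α ≥ 1 - ε` the kernel is feasible for `R_X^c(d,ε)`, and
taking the infimum over `Q` gives `R_X^c(d,ε) ≤ R_X^{c,+}(d,ε)`.
-/

open Finset Real

section Gibbs

variable {Y : Type*} [Fintype Y]

lemma sub_le_mul_log_div {a b : ℝ} (ha : 0 ≤ a) (hb : 0 ≤ b) (hab : b = 0 → a = 0) :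
    a - b ≤ a * log (a / b) := by
  rcases ha.eq_or_lt with rfl | ha
  · simpa using hb
  have hb : 0 < b := hb.lt_of_ne fun h => ha.ne' (hab h.symm)
  have h := one_sub_inv_le_log_of_pos (div_pos ha hb)
  rw [inv_div] at h
  calc a - b = a * (1 - b / a) := by field_simp
    _ ≤ a * log (a / b) := mul_le_mul_of_nonneg_left h ha.le

lemma klDiv_nonneg {μ ν : Y → ℝ} (hμ : ∀ y, 0 ≤ μ y) (hν : ∀ y, 0 ≤ ν y)
    (hsum : ∑ y, ν y ≤ ∑ y, μ y) (hac : ∀ y, ν y = 0 → μ y = 0) : 0 ≤ klDiv μ ν := by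
  have h : ∑ y, μ y - ∑ y, ν y ≤ ∑ y, μ y * log (μ y / ν y) := by
    rw [← sum_sub_distrib]
    exact sum_le_sum fun y _ => sub_le_mul_log_div (hμ y) (hν y) (hac y)
  have hkl : klDiv μ ν = (∑ y, μ y * log (μ y / ν y)) / log 2 := by
    simp only [klDiv, logb, sum_div, mul_div_assoc]
  rw [hkl]
  exact div_nonneg (by linarith) (log_nonneg one_le_two)

lemma klDiv_mul_right (Q w : Y → ℝ) :
    klDiv (fun y => Q y * w y) Q = ∑ y, Q y * (w y * logb 2 (w y)) := by
  refine sum_congr rfl fun y _ => ?_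
  rcases eq_or_ne (Q y) 0 with h | h
  · simp [h]
  · rw [mul_div_cancel_left₀ _ h, mul_assoc]

end Gibbs

section MutualInformation

variable {X Y : Type*} [Fintype X] [Fintype Y] {p : X → ℝ} {K : X → Y → ℝ}

lemma marg_isPMF (hp : isPMF p) (hK : ∀ x, isPMF (K x)) : isPMF (marg p K) := by
  refine ⟨fun y => sum_nonneg fun x _ => mul_nonneg (hp.1 x) ((hK x).1 y), ?_⟩
  simp only [marg]
  rw [sum_comm]
  simp [← mul_sum, (hK _).2, hp.2]

lemma mul_le_marg (hp : ∀ x, 0 ≤ p x) (hK : ∀ x y, 0 ≤ K x y) (x : X) (y : Y) :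
    p x * K x y ≤ marg p K y :=
  single_le_sum (f := fun x => p x * K x y) (fun x _ => mul_nonneg (hp x) (hK x y)) (mem_univ x)

lemma mutInfo_nonneg (hp : isPMF p) (hK : ∀ x, isPMF (K x)) : 0 ≤ mutInfo p K := by
  have hm := marg_isPMF hp hK
  refine sum_nonneg fun x _ => ?_
  rcases (hp.1 x).eq_or_lt with hx | hx
  · rw [← hx, zero_mul]
  refine mul_nonneg hx.le (klDiv_nonneg (hK x).1 hm.1 (by rw [hm.2, (hK x).2]) fun y hy => ?_)
  have h := mul_le_marg hp.1 (fun x => (hK x).1) x y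
  rw [hy] at h
  exact le_antisymm (nonpos_of_mul_nonpos_right h hx) ((hK x).1 y)

lemma sum_mul_klDiv_eq_mutInfo_add (hp : ∀ x, 0 ≤ p x) (hK : ∀ x y, 0 ≤ K x y) {Q : Y → ℝ}
    (hac : ∀ x y, Q y = 0 → K x y = 0) :
    ∑ x, p x * klDiv (K x) Q = mutInfo p K + klDiv (marg p K) Q := by
  have hterm : ∀ x y, p x * (K x y * logb 2 (K x y / Q y)) =
      p x * (K x y * logb 2 (K x y / marg p K y)) +
        p x * K x y * logb 2 (marg p K y / Q y) := by
    intro x y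
    rcases (hp x).eq_or_lt with hx | hx
    · simp [← hx]
    rcases (hK x y).eq_or_lt with hk | hk
    · simp [← hk]
    have hQ : Q y ≠ 0 := fun h => hk.ne' (hac x y h)
    have hm : marg p K y ≠ 0 := ((mul_pos hx hk).trans_le (mul_le_marg hp hK x y)).ne'
    rw [logb_div hk.ne' hQ, logb_div hk.ne' hm, logb_div hm hQ]
    ring
  simp only [mutInfo, klDiv, mul_sum, hterm, sum_add_distrib]
  rw [sum_comm (f := fun x y => p x * K x y * logb 2 (marg p K y / Q y))]
  simp only [marg, sum_mul]

lemma mutInfo_le_sum_mul_klDiv (hp : isPMF p) (hK : ∀ x, isPMF (K x)) {Q : Y → ℝ}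
    (hQ : isPMF Q) (hac : ∀ x y, Q y = 0 → K x y = 0) :
    mutInfo p K ≤ ∑ x, p x * klDiv (K x) Q := by
  have hm := marg_isPMF hp hK
  rw [sum_mul_klDiv_eq_mutInfo_add hp.1 (fun x => (hK x).1) hac]
  refine le_add_of_nonneg_right (klDiv_nonneg hm.1 hQ.1 (by rw [hm.2, hQ.2]) fun y hy => ?_)
  exact sum_eq_zero fun x _ => by rw [hac x y hy, mul_zero]

end MutualInformation

section Tilt

variable {Y : Type*} [Fintype Y] (Q : Y → ℝ) (P : Y → Prop) [DecidablePred P]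

def massOn : ℝ := ∑ y, if P y then Q y else 0

def tilt (a : ℝ) (y : Y) : ℝ :=
  Q y * if P y then a / massOn Q P else (1 - a) / (1 - massOn Q P)

lemma sum_mul_ite (c d : ℝ) :
    ∑ y, Q y * (if P y then c else d) = c * massOn Q P + d * (∑ y, Q y - massOn Q P) := by
  simp only [massOn, mul_sum, ← sum_sub_distrib, ← sum_add_distrib]
  refine sum_congr rfl fun y _ => ?_
  split_ifs <;> ring

-- At `q = 1` this is `0 / 0 * 0 = 0`: it is why `tilt` needs `q ≤ a` rather than `q < 1`.
lemma one_sub_div_one_sub_mul_cancel {a q : ℝ} (hqa : q ≤ a) (ha : a ≤ 1) :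
    (1 - a) / (1 - q) * (1 - q) = 1 - a :=
  div_mul_cancel_of_imp fun h => by linarith

variable {Q P}

lemma massOn_le_one (hQ : isPMF Q) : massOn Q P ≤ 1 :=
  hQ.2 ▸ sum_le_sum fun y _ => by split_ifs <;> simp [hQ.1 y]

variable {a : ℝ} (hq : 0 < massOn Q P)
include hq

lemma massOn_tilt : massOn (tilt Q P a) P = a := by
  have h := sum_mul_ite Q P (a / massOn Q P) 0
  simp only [zero_mul, add_zero, div_mul_cancel₀ a hq.ne'] at h
  refine Eq.trans (sum_congr rfl fun y _ => ?_) h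
  simp only [tilt]
  split_ifs <;> simp

variable (hQ : isPMF Q) (hqa : massOn Q P ≤ a) (ha : a ≤ 1)
include hQ hqa ha

lemma tilt_isPMF : isPMF (tilt Q P a) := by
  refine ⟨fun y => mul_nonneg (hQ.1 y) ?_, ?_⟩
  · split_ifs
    · exact div_nonneg (hq.le.trans hqa) hq.le
    · exact div_nonneg (by linarith) (by linarith [massOn_le_one (P := P) hQ])
  · simp only [tilt]
    rw [sum_mul_ite, hQ.2, div_mul_cancel₀ a hq.ne', one_sub_div_one_sub_mul_cancel hqa ha]
    ring

lemma klDiv_tilt : klDiv (tilt Q P a) Q = bdiv a (massOn Q P) := by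
  refine (klDiv_mul_right Q _).trans ?_
  simp only [apply_ite (fun w => w * logb 2 w)]
  rw [sum_mul_ite, hQ.2, bdiv, mul_right_comm (a / _), div_mul_cancel₀ a hq.ne',
    mul_right_comm ((1 - a) / _), one_sub_div_one_sub_mul_cancel hqa ha]

end Tilt

section ConditionalExcess

variable {X Y : Type*} [Fintype Y] {df : X → Y → ℝ} {D ε : ℝ}

lemma probBall_eq_massOn (Q : Y → ℝ) (x : X) : probBall Q df D x = massOn Q (df x · ≤ D) := rfl

def excessKernel (Q : Y → ℝ) (df : X → Y → ℝ) (D ε : ℝ) (x : X) : Y → ℝ :=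
  tilt Q (df x · ≤ D) (max (1 - ε) (probBall Q df D x))

lemma excessKernel_spec {Q : Y → ℝ} {x : X} (hε : 0 ≤ ε) (hQ : isPMF Q)
    (hq : 0 < probBall Q df D x) :
    isPMF (excessKernel Q df D ε x) ∧
      probBall (excessKernel Q df D ε x) df D x = max (1 - ε) (probBall Q df D x) ∧
      klDiv (excessKernel Q df D ε x) Q =
        bdiv (max (1 - ε) (probBall Q df D x)) (probBall Q df D x) := by
  have hqa : probBall Q df D x ≤ max (1 - ε) (probBall Q df D x) := le_max_right _ _
  have ha : max (1 - ε) (probBall Q df D x) ≤ 1 :=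
    max_le (by linarith) (massOn_le_one (P := (df x · ≤ D)) hQ)
  exact ⟨tilt_isPMF (P := (df x · ≤ D)) hq hQ hqa ha, massOn_tilt (P := (df x · ≤ D)) hq,
    klDiv_tilt (P := (df x · ≤ D)) hq hQ hqa ha⟩

variable [Fintype X] {p : X → ℝ}

/-- The paper's `R_X^c(d, ε)`. -/
def condExcessRate (p : X → ℝ) (df : X → Y → ℝ) (D ε : ℝ) : ℝ :=
  sInf {r : ℝ | ∃ K' : X → Y → ℝ, (∀ x, isPMF (K' x)) ∧
    (∀ x, 0 < p x → 1 - ε ≤ probBall (K' x) df D x) ∧ r = mutInfo p K'}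

lemma condExcessRate_le_mutInfo (hp : isPMF p) {K : X → Y → ℝ} (hK : ∀ x, isPMF (K x))
    (hexcess : ∀ x, 0 < p x → 1 - ε ≤ probBall (K x) df D x) :
    condExcessRate p df D ε ≤ mutInfo p K :=
  csInf_le ⟨0, by rintro r ⟨K', hK', -, rfl⟩; exact mutInfo_nonneg hp hK'⟩ ⟨K, hK, hexcess, rfl⟩

theorem condExcessRate_le_sum_mul_bdiv {Q : Y → ℝ} (hε : 0 ≤ ε) (hp : isPMF p) (hQ : isPMF Q)
    (hQpos : ∀ x, 0 < p x → 0 < probBall Q df D x) :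
    condExcessRate p df D ε ≤
      ∑ x, p x * bdiv (max (1 - ε) (probBall Q df D x)) (probBall Q df D x) := by
  -- off the support of `p` the ball may be `Q`-null, so any pmf will do there
  set K : X → Y → ℝ := fun x => if 0 < p x then excessKernel Q df D ε x else Q
  have hK : ∀ x, isPMF (K x) := fun x => by
    by_cases hx : 0 < p x
    · simpa [K, hx] using (excessKernel_spec hε hQ (hQpos x hx)).1
    · simpa [K, hx] using hQ
  have hexcess : ∀ x, 0 < p x → 1 - ε ≤ probBall (K x) df D x := fun x hx => by
    simp only [K, if_pos hx, (excessKernel_spec hε hQ (hQpos x hx)).2.1, le_max_left]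
  have hac : ∀ x y, Q y = 0 → K x y = 0 := fun x y hy => by
    simp only [K]
    split_ifs <;> simp [excessKernel, tilt, hy]
  have hkl : ∀ x, p x * klDiv (K x) Q =
      p x * bdiv (max (1 - ε) (probBall Q df D x)) (probBall Q df D x) := fun x => by
    rcases (hp.1 x).eq_or_lt with hx | hx
    · simp [← hx]
    · simp only [K, if_pos hx, (excessKernel_spec hε hQ (hQpos x hx)).2.2]
  calc condExcessRate p df D ε ≤ mutInfo p K := condExcessRate_le_mutInfo hp hK hexcess
    _ ≤ ∑ x, p x * klDiv (K x) Q := mutInfo_le_sum_mul_klDiv hp hK hQ hac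
    _ = _ := sum_congr rfl fun x _ => hkl x

end ConditionalExcess

theorem cond_excess_achievability_general {X Y : Type*} [Fintype X] [Fintype Y]
    (p : X → ℝ) (df : X → Y → ℝ) (D ε : ℝ) (hε0 : 0 < ε)
    (hp : isPMF p) (Q : Y → ℝ) (hQ : isPMF Q)
    (hQB : ∀ x : X, 0 < probBall Q df D x ∧ probBall Q df D x < 1)
    (K : X → Y → ℝ)
    (hKdef : ∀ x y, K x y =
        max (1 - ε) (probBall Q df D x) *
            (if df x y ≤ D then Q y else 0) / probBall Q df D x +
          (1 - max (1 - ε) (probBall Q df D x)) *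
            (if df x y ≤ D then 0 else Q y) / (1 - probBall Q df D x)) :
    (∀ x, isPMF (K x) ∧ 1 - probBall (K x) df D x ≤ ε ∧
        klDiv (K x) Q =
          bdiv (max (1 - ε) (probBall Q df D x)) (probBall Q df D x)) ∧
    sInf {r : ℝ | ∃ K' : X → Y → ℝ, (∀ x, isPMF (K' x)) ∧
        (∀ x, 0 < p x → 1 - ε ≤ probBall (K' x) df D x) ∧ r = mutInfo p K'} ≤
      ∑ x, p x * bdiv (max (1 - ε) (probBall Q df D x)) (probBall Q df D x) ∧
    sInf {r : ℝ | ∃ K' : X → Y → ℝ, (∀ x, isPMF (K' x)) ∧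
        (∀ x, 0 < p x → 1 - ε ≤ probBall (K' x) df D x) ∧ r = mutInfo p K'} ≤
      sInf {r : ℝ | ∃ Q' : Y → ℝ, isPMF Q' ∧ (∀ x, 0 < p x → 0 < probBall Q' df D x) ∧
        r = ∑ x, p x *
          bdiv (max (1 - ε) (probBall Q' df D x)) (probBall Q' df D x)} := by
  have hK : K = excessKernel Q df D ε := funext₂ fun x y => by
    rw [hKdef]
    simp only [excessKernel, tilt, ← probBall_eq_massOn]
    split_ifs <;> ring
  subst hK
  refine ⟨fun x => ?_, condExcessRate_le_sum_mul_bdiv hε0.le hp hQ fun x _ => (hQB x).1, ?_⟩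
  · obtain ⟨hpmf, hball, hkl⟩ := excessKernel_spec hε0.le hQ (hQB x).1
    exact ⟨hpmf, by rw [hball]; linarith [le_max_left (1 - ε) (probBall Q df D x)], hkl⟩
  · refine le_csInf ⟨_, Q, hQ, fun x _ => (hQB x).1, rfl⟩ ?_
    rintro r ⟨Q', hQ', hQ'pos, rfl⟩
    exact condExcessRate_le_sum_mul_bdiv hε0.le hp hQ' hQ'pos

/-- achievability for conditional excess distortion. Given a pmf `Q` with
`0 < Q(B_D(x)) < 1` for all `x`, the kernel `K` putting mass `α_Q(x)` on `Q` restricted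
to `B_D(x)` (normalized) and mass `1 - α_Q(x)` on `Q` restricted to the complement
(normalized), with `α_Q(x) = max (1-ε) (Q(B_D(x)))`, is a pmf kernel with
`K(x)(B_D(x)ᶜ) ≤ ε` and `D(K(x)‖Q) = d(α_Q(x)‖Q(B_D(x)))`; hence
`R_X^c(d,ε) ≤ E[d(α_Q(X)‖Q(B_D(X)))]`, and so `R_X^c(d,ε) ≤ R_X^{c,+}(d,ε)`. -/
theorem cond_excess_achievability {X Y : Type*} [Fintype X] [Fintype Y] [Nonempty Y]
    (p : X → ℝ) (df : X → Y → ℝ) (D ε : ℝ) (hε0 : 0 < ε) (hε1 : ε < 1)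
    (hp : isPMF p) (Q : Y → ℝ) (hQ : isPMF Q)
    (hQB : ∀ x : X, 0 < probBall Q df D x ∧ probBall Q df D x < 1)
    (K : X → Y → ℝ)
    (hKdef : ∀ x y, K x y =
        max (1 - ε) (probBall Q df D x) *
            (if df x y ≤ D then Q y else 0) / probBall Q df D x +
          (1 - max (1 - ε) (probBall Q df D x)) *
            (if df x y ≤ D then 0 else Q y) / (1 - probBall Q df D x)) :
    (∀ x, isPMF (K x) ∧ 1 - probBall (K x) df D x ≤ ε ∧
        klDiv (K x) Q =
          bdiv (max (1 - ε) (probBall Q df D x)) (probBall Q df D x)) ∧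
    sInf {r : ℝ | ∃ K' : X → Y → ℝ, (∀ x, isPMF (K' x)) ∧
        (∀ x, 0 < p x → 1 - ε ≤ probBall (K' x) df D x) ∧ r = mutInfo p K'} ≤
      ∑ x, p x * bdiv (max (1 - ε) (probBall Q df D x)) (probBall Q df D x) ∧
    sInf {r : ℝ | ∃ K' : X → Y → ℝ, (∀ x, isPMF (K' x)) ∧
        (∀ x, 0 < p x → 1 - ε ≤ probBall (K' x) df D x) ∧ r = mutInfo p K'} ≤
      sInf {r : ℝ | ∃ Q' : Y → ℝ, isPMF Q' ∧ (∀ x, 0 < p x → 0 < probBall Q' df D x) ∧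
        r = ∑ x, p x *
          bdiv (max (1 - ε) (probBall Q' df D x)) (probBall Q' df D x)} :=
  cond_excess_achievability_general p df D ε hε0 hp Q hQ hQB K hKdef
end
end
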